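/- arXiv:2212.03138 — 4 statements merged into one kernel-verified Lean document; each statement's English description precedes it below -/
import Mathlib

section
/- For every real number p with 1 < p ≤ 2 there exists a constant d > 0 such that for all vectors x, y ∈ ℝ^N, one has ‖|x|^{p-2} x − |y|^{p-2} y‖ ≤ d ‖x − y‖^{p-1} (where |x|^{p-2} x is interpreted as 0 when x = 0). -/
/-!
Write `δ = ‖x - y‖`, `s = p - 1 ∈ (0, 1]`, and assume `‖y‖ ≤ ‖x‖`.
If `‖y‖ < δ`, both vectors are `O(δ)` and each term of the difference is bounded separately,
using the subadditivity of `t ↦ t ^ s`. If `δ ≤ ‖y‖`, split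
`‖x‖^(p-2) x - ‖y‖^(p-2) y = ‖y‖^(p-2) (x - y) - (‖y‖^(p-2) - ‖x‖^(p-2)) x`;
the scalar factor satisfies `(a^(p-2) - b^(p-2)) b ≤ a^(p-2) (b - a)` for `a ≤ b` (this is
`a^s ≤ b^s`), and `a^(p-2) δ ≤ δ^s` because `δ ≤ a` and `p - 2 ≤ 0`.
-/

open Real

section

variable {E : Type*} [NormedAddCommGroup E] [NormedSpace ℝ E]

lemma norm_rpow_sub_two_smul_self {p : ℝ} (hp : p ≠ 1) (z : E) :
    ‖(‖z‖ ^ (p - 2)) • z‖ = ‖z‖ ^ (p - 1) := by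
  rcases eq_or_ne z 0 with rfl | hz
  · simp [zero_rpow (sub_ne_zero.2 hp)]
  · rw [norm_smul, norm_of_nonneg (rpow_nonneg (norm_nonneg z) _),
      ← rpow_add_one (norm_ne_zero_iff.2 hz)]
    ring_nf

lemma rpow_sub_two_mul_le_rpow_sub_one {p a δ : ℝ} (hp : p ≤ 2) (hδ : 0 < δ) (hδa : δ ≤ a) :
    a ^ (p - 2) * δ ≤ δ ^ (p - 1) := by
  calc a ^ (p - 2) * δ ≤ δ ^ (p - 2) * δ :=
        mul_le_mul_of_nonneg_right (rpow_le_rpow_of_nonpos hδ hδa (by linarith)) hδ.le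
    _ = δ ^ (p - 1) := by rw [← rpow_add_one hδ.ne']; ring_nf

lemma rpow_sub_two_sub_mul_le {p a b : ℝ} (hp : 1 ≤ p) (ha : 0 < a) (hab : a ≤ b) :
    (a ^ (p - 2) - b ^ (p - 2)) * b ≤ a ^ (p - 2) * (b - a) := by
  have hb : 0 < b := ha.trans_le hab
  have hmono : a ^ (p - 1) ≤ b ^ (p - 1) := rpow_le_rpow ha.le hab (by linarith)
  rw [show p - 1 = p - 2 + 1 by ring, rpow_add_one ha.ne', rpow_add_one hb.ne'] at hmono
  linarith

lemma norm_rpow_smul_sub_le_of_norm_lt {p : ℝ} (hp1 : 1 < p) (hp2 : p ≤ 2) {x y : E}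
    (hy : ‖y‖ < ‖x - y‖) :
    ‖(‖x‖ ^ (p - 2)) • x - (‖y‖ ^ (p - 2)) • y‖ ≤ 3 * ‖x - y‖ ^ (p - 1) := by
  have hs0 : 0 ≤ p - 1 := by linarith
  have hs1 : p - 1 ≤ 1 := by linarith
  have hy_pow : ‖y‖ ^ (p - 1) ≤ ‖x - y‖ ^ (p - 1) := rpow_le_rpow (norm_nonneg y) hy.le hs0
  have hx_pow : ‖x‖ ^ (p - 1) ≤ ‖y‖ ^ (p - 1) + ‖x - y‖ ^ (p - 1) :=
    calc ‖x‖ ^ (p - 1) ≤ (‖y‖ + ‖x - y‖) ^ (p - 1) :=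
          rpow_le_rpow (norm_nonneg x) (norm_le_norm_add_norm_sub' x y) hs0
      _ ≤ ‖y‖ ^ (p - 1) + ‖x - y‖ ^ (p - 1) :=
          rpow_add_le_add_rpow (norm_nonneg y) (norm_nonneg _) hs0 hs1
  calc ‖(‖x‖ ^ (p - 2)) • x - (‖y‖ ^ (p - 2)) • y‖
      ≤ ‖(‖x‖ ^ (p - 2)) • x‖ + ‖(‖y‖ ^ (p - 2)) • y‖ := norm_sub_le _ _
    _ = ‖x‖ ^ (p - 1) + ‖y‖ ^ (p - 1) := by
        rw [norm_rpow_sub_two_smul_self hp1.ne', norm_rpow_sub_two_smul_self hp1.ne']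
    _ ≤ 3 * ‖x - y‖ ^ (p - 1) := by linarith

lemma norm_rpow_smul_sub_le_of_le_norm {p : ℝ} (hp1 : 1 < p) (hp2 : p ≤ 2) {x y : E}
    (hyx : ‖y‖ ≤ ‖x‖) (hδ : 0 < ‖x - y‖) (hy : ‖x - y‖ ≤ ‖y‖) :
    ‖(‖x‖ ^ (p - 2)) • x - (‖y‖ ^ (p - 2)) • y‖ ≤ 2 * ‖x - y‖ ^ (p - 1) := by
  have hy0 : 0 < ‖y‖ := hδ.trans_le hy
  have hdecomp : (‖x‖ ^ (p - 2)) • x - (‖y‖ ^ (p - 2)) • y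
      = (‖y‖ ^ (p - 2)) • (x - y) - (‖y‖ ^ (p - 2) - ‖x‖ ^ (p - 2)) • x := by
    rw [smul_sub, sub_smul]; abel
  have hfirst : ‖(‖y‖ ^ (p - 2)) • (x - y)‖ ≤ ‖x - y‖ ^ (p - 1) := by
    rw [norm_smul, norm_of_nonneg (rpow_nonneg hy0.le _)]
    exact rpow_sub_two_mul_le_rpow_sub_one hp2 hδ hy
  have hsecond : ‖(‖y‖ ^ (p - 2) - ‖x‖ ^ (p - 2)) • x‖ ≤ ‖x - y‖ ^ (p - 1) := by
    have hcoeff : 0 ≤ ‖y‖ ^ (p - 2) - ‖x‖ ^ (p - 2) :=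
      sub_nonneg.2 (rpow_le_rpow_of_nonpos hy0 hyx (by linarith))
    rw [norm_smul, norm_of_nonneg hcoeff]
    calc (‖y‖ ^ (p - 2) - ‖x‖ ^ (p - 2)) * ‖x‖ ≤ ‖y‖ ^ (p - 2) * (‖x‖ - ‖y‖) :=
          rpow_sub_two_sub_mul_le hp1.le hy0 hyx
      _ ≤ ‖y‖ ^ (p - 2) * ‖x - y‖ := by gcongr; exact norm_sub_norm_le x y
      _ ≤ ‖x - y‖ ^ (p - 1) := rpow_sub_two_mul_le_rpow_sub_one hp2 hδ hy
  rw [hdecomp]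
  linarith [norm_sub_le ((‖y‖ ^ (p - 2)) • (x - y)) ((‖y‖ ^ (p - 2) - ‖x‖ ^ (p - 2)) • x)]

lemma norm_rpow_smul_sub_le {p : ℝ} (hp1 : 1 < p) (hp2 : p ≤ 2) (x y : E) :
    ‖(‖x‖ ^ (p - 2)) • x - (‖y‖ ^ (p - 2)) • y‖ ≤ 3 * ‖x - y‖ ^ (p - 1) := by
  wlog hyx : ‖y‖ ≤ ‖x‖ generalizing x y
  · rw [norm_sub_rev, norm_sub_rev x]
    exact this y x (le_of_not_ge hyx)
  rcases eq_or_ne x y with rfl | hxy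
  · simp only [sub_self, norm_zero]
    positivity
  rcases lt_or_ge ‖y‖ ‖x - y‖ with hy | hy
  · exact norm_rpow_smul_sub_le_of_norm_lt hp1 hp2 hy
  · have hδ : 0 < ‖x - y‖ := norm_pos_iff.2 (sub_ne_zero.2 hxy)
    linarith [norm_rpow_smul_sub_le_of_le_norm hp1 hp2 hyx hδ hy, rpow_nonneg hδ.le (p - 1)]

end

/-- For every real `p` with `1 < p ≤ 2` there is `d > 0` such that for all
`x y : ℝ^N`, `‖‖x‖^(p-2) • x - ‖y‖^(p-2) • y‖ ≤ d * ‖x - y‖^(p-1)`. -/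
theorem stmt0 (p : ℝ) (hp1 : 1 < p) (hp2 : p ≤ 2) (N : ℕ) :
    ∃ d : ℝ, 0 < d ∧ ∀ x y : EuclideanSpace ℝ (Fin N),
      ‖(‖x‖ ^ (p - 2)) • x - (‖y‖ ^ (p - 2)) • y‖ ≤ d * ‖x - y‖ ^ (p - 1) :=
  ⟨3, by norm_num, norm_rpow_smul_sub_le hp1 hp2⟩
end

section
/- For every real number p with 1 < p < 2 there exists a constant d > 0 such that for all vectors x, y ∈ ℝ^N with ‖x‖ + ‖y‖ > 0, one has ⟨|x|^{p-2} x − |y|^{p-2} y, x − y⟩ ≥ d (‖x‖ + ‖y‖)^{p-2} ‖x − y‖². -/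
/-!
Write `a = ‖x‖`, `b = ‖y‖` and `s = a * b - ⟪x, y⟫ ≥ 0`. Both sides are affine in `s`:
`‖x - y‖² = (a - b)² + 2 s`, and the inner product is
`(a - b) (a^(p-1) - b^(p-1)) + (a^(p-2) + b^(p-2)) s`.
Concavity of `u ↦ u^(p-1)` gives `(a - b) (a^(p-1) - b^(p-1)) ≥ (p - 1) (a + b)^(p-2) (a - b)²`,
and `(a + b)^(p-2) ≤ a^(p-2) + b^(p-2)` because `p - 2 < 0`; hence `d = (p - 1) / 2` works.
-/

open RealInnerProductSpace

namespace Real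

lemma rpow_le_rpow_add_mul_rpow_sub_one_mul_sub {q a b : ℝ} (hq0 : 0 ≤ q) (hq1 : q ≤ 1)
    (ha : 0 < a) (hb : 0 ≤ b) :
    b ^ q ≤ a ^ q + q * a ^ (q - 1) * (b - a) := by
  have bernoulli := rpow_one_add_le_one_add_mul_self (s := b / a - 1)
    (by linarith [div_nonneg hb ha.le]) hq0 hq1
  rw [add_sub_cancel, div_rpow hb ha.le, div_le_iff₀ (rpow_pos_of_pos ha q)] at bernoulli
  calc b ^ q ≤ (1 + q * (b / a - 1)) * a ^ q := bernoulli
    _ = a ^ q + q * (a ^ q / a) * (b - a) := by field_simp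
    _ = _ := by rw [rpow_sub_one ha.ne']

lemma mul_add_rpow_sub_one_mul_sq_le {q a b : ℝ} (hq0 : 0 ≤ q) (hq1 : q ≤ 1)
    (ha : 0 ≤ a) (hb : 0 ≤ b) (hab : 0 < a + b) :
    q * (a + b) ^ (q - 1) * (a - b) ^ 2 ≤ (a - b) * (a ^ q - b ^ q) := by
  wlog hba : b ≤ a generalizing a b
  · calc q * (a + b) ^ (q - 1) * (a - b) ^ 2 = q * (b + a) ^ (q - 1) * (b - a) ^ 2 := by
          rw [add_comm a b]; ring
      _ ≤ (b - a) * (b ^ q - a ^ q) := this hb ha (by linarith) (by linarith)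
      _ = _ := by ring
  have ha' : 0 < a := by linarith
  have tangent := rpow_le_rpow_add_mul_rpow_sub_one_mul_sub hq0 hq1 ha' hb
  have antitone : (a + b) ^ (q - 1) ≤ a ^ (q - 1) :=
    rpow_le_rpow_of_nonpos ha' (by linarith) (by linarith)
  have slope : q * (a + b) ^ (q - 1) * (a - b) ≤ a ^ q - b ^ q :=
    calc q * (a + b) ^ (q - 1) * (a - b) ≤ q * a ^ (q - 1) * (a - b) := by
          gcongr
      _ ≤ a ^ q - b ^ q := by linarith
  calc q * (a + b) ^ (q - 1) * (a - b) ^ 2 = (a - b) * (q * (a + b) ^ (q - 1) * (a - b)) := by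
        ring
    _ ≤ (a - b) * (a ^ q - b ^ q) := mul_le_mul_of_nonneg_left slope (by linarith)

lemma add_rpow_le_rpow_add_rpow_of_nonpos {r a b : ℝ} (hr : r ≤ 0) (ha : 0 ≤ a) (hb : 0 ≤ b)
    (hab : 0 < a + b) :
    (a + b) ^ r ≤ a ^ r + b ^ r := by
  rcases ha.eq_or_lt with rfl | ha'
  · simpa using rpow_nonneg le_rfl r
  · linarith [rpow_le_rpow_of_nonpos ha' (le_add_of_nonneg_right hb) hr, rpow_nonneg hb r]

end Real

open Real

lemma inner_rpow_smul_sub_rpow_smul {E : Type*} [NormedAddCommGroup E] [InnerProductSpace ℝ E]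
    (r : ℝ) (x y : E) :
    ⟪‖x‖ ^ r • x - ‖y‖ ^ r • y, x - y⟫ =
      (‖x‖ - ‖y‖) * (‖x‖ ^ r * ‖x‖ - ‖y‖ ^ r * ‖y‖) +
        (‖x‖ ^ r + ‖y‖ ^ r) * (‖x‖ * ‖y‖ - ⟪x, y⟫) := by
  simp only [inner_sub_left, inner_sub_right, real_inner_smul_left, real_inner_self_eq_norm_sq,
    real_inner_comm x y]
  ring

/-- For every real `1 < p < 2` there is `d > 0` such that for all `x y : ℝ^N`
with `‖x‖ + ‖y‖ > 0`,
`⟪‖x‖^(p-2) • x - ‖y‖^(p-2) • y, x - y⟫ ≥ d * (‖x‖ + ‖y‖)^(p-2) * ‖x - y‖^2`. -/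
theorem stmt2 (p : ℝ) (hp1 : 1 < p) (hp2 : p < 2) (N : ℕ) :
    ∃ d : ℝ, 0 < d ∧ ∀ x y : EuclideanSpace ℝ (Fin N), 0 < ‖x‖ + ‖y‖ →
      d * (‖x‖ + ‖y‖) ^ (p - 2) * ‖x - y‖ ^ 2 ≤
        inner ℝ ((‖x‖ ^ (p - 2)) • x - (‖y‖ ^ (p - 2)) • y) (x - y) := by
  refine ⟨(p - 1) / 2, by linarith, fun x y hxy => ?_⟩
  have rpow_mul_self (u : ℝ) (hu : 0 ≤ u) : u ^ (p - 2) * u = u ^ (p - 1) := by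
    rw [← rpow_add_one' hu (by linarith)]; ring_nf
  have concavity := mul_add_rpow_sub_one_mul_sq_le (q := p - 1) (by linarith) (by linarith)
    (norm_nonneg x) (norm_nonneg y) hxy
  rw [sub_sub, one_add_one_eq_two] at concavity
  have subadd := add_rpow_le_rpow_add_rpow_of_nonpos (r := p - 2) (by linarith)
    (norm_nonneg x) (norm_nonneg y) hxy
  have hs : 0 ≤ ‖x‖ * ‖y‖ - ⟪x, y⟫ := sub_nonneg.2 (real_inner_le_norm x y)
  have hc : 0 ≤ (‖x‖ + ‖y‖) ^ (p - 2) := rpow_nonneg hxy.le _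
  rw [inner_rpow_smul_sub_rpow_smul, rpow_mul_self _ (norm_nonneg x),
    rpow_mul_self _ (norm_nonneg y), norm_sub_sq_real]
  nlinarith [mul_le_mul_of_nonneg_right subadd hs, mul_nonneg hc hs,
    mul_nonneg (mul_nonneg (by linarith : (0 : ℝ) ≤ p - 1) hc) (sq_nonneg (‖x‖ - ‖y‖))]
end

section
/- For every real number p > 1 there exists a constant d > 0 such that for all vectors x, y ∈ ℝ^N with ‖x‖ + ‖y‖ > 0, one has ‖|x|^{p-2} x − |y|^{p-2} y‖ ≤ d (‖x‖ + ‖y‖)^{p-2} ‖x − y‖. -/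
open Real

private lemma aux_t_nonneg {s t : ℝ} (hs : 0 ≤ s) (ht0 : 0 ≤ t) (ht1 : t ≤ 1) :
    (1 - t ^ s) * t ≤ s * (1 - t) := by
  have hb := one_add_mul_self_le_rpow_one_add (s := t - 1) (by linarith) (by linarith : 1 ≤ s + 1)
  rw [show 1 + (t - 1) = t by ring] at hb
  have hts : t ^ (s + 1) = t ^ s * t := by
    rcases eq_or_lt_of_le ht0 with h | h
    · rw [← h, Real.zero_rpow (by linarith : s + 1 ≠ 0), mul_zero]
    · exact Real.rpow_add_one h.ne' s
  rw [hts] at hb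
  nlinarith

private lemma aux_t_neg {s t : ℝ} (hs : -1 ≤ s) (ht0 : 0 ≤ t) (ht1 : t ≤ 1) :
    (t ^ s - 1) * t ≤ 1 - t := by
  rcases eq_or_lt_of_le ht0 with h | h
  · rw [← h]; norm_num
  have hts : t ^ (s + 1) = t ^ s * t := Real.rpow_add_one h.ne' s
  have h1 : t ^ (s + 1) ≤ 1 := Real.rpow_le_one ht0 ht1 (by linarith)
  rw [hts] at h1
  nlinarith

set_option maxHeartbeats 1000000 in
private lemma key (p : ℝ) (hp : 1 < p) {N : ℕ} (x y : EuclideanSpace ℝ (Fin N))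
    (hxy : ‖y‖ ≤ ‖x‖) (hx : 0 < ‖x‖) :
    ‖(‖x‖ ^ (p - 2)) • x - (‖y‖ ^ (p - 2)) • y‖ ≤
      (p + 4) * (‖x‖ + ‖y‖) ^ (p - 2) * ‖x - y‖ := by
  set a := ‖x‖ with ha_def
  set b := ‖y‖ with hb_def
  set s := p - 2 with hs_def
  have hb0 : 0 ≤ b := norm_nonneg y
  have hA : (0:ℝ) ≤ a ^ s := Real.rpow_nonneg (by positivity) s
  have hB : (0:ℝ) ≤ b ^ s := Real.rpow_nonneg hb0 s
  have hdist : a - b ≤ ‖x - y‖ := by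
    have := norm_sub_norm_le x y
    linarith
  have hdist0 : (0:ℝ) ≤ ‖x - y‖ := norm_nonneg _
  have hsplit : (a ^ s) • x - (b ^ s) • y = (a ^ s) • (x - y) + (a ^ s - b ^ s) • y := by
    rw [smul_sub, sub_smul]; abel
  have hnorm : ‖(a ^ s) • x - (b ^ s) • y‖ ≤ a ^ s * ‖x - y‖ + |a ^ s - b ^ s| * b := by
    rw [hsplit]
    refine (norm_add_le _ _).trans ?_
    rw [norm_smul, norm_smul, Real.norm_eq_abs, Real.norm_eq_abs, abs_of_nonneg hA]
  -- t = b / a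
  set t := b / a with ht_def
  have ht0 : 0 ≤ t := by positivity
  have ht1 : t ≤ 1 := div_le_one_of_le₀ hxy hx.le
  have hbt : b = t * a := by rw [ht_def]; field_simp
  have hBt : b ^ s = t ^ s * a ^ s := by
    rw [hbt, Real.mul_rpow ht0 hx.le]
  have hApos : (0:ℝ) < a ^ s := Real.rpow_pos_of_pos hx s
  rcases le_or_gt 2 p with h2 | h2
  · -- s ≥ 0
    have hs0 : 0 ≤ s := by simp [hs_def]; linarith
    have hBA : b ^ s ≤ a ^ s := Real.rpow_le_rpow hb0 hxy hs0
    have ht := aux_t_nonneg hs0 ht0 ht1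
    -- (a^s - b^s)*b ≤ s * a^s * (a-b)
    have hscal : (a ^ s - b ^ s) * b ≤ s * a ^ s * (a - b) := by
      have := mul_le_mul_of_nonneg_left ht (by positivity : (0:ℝ) ≤ a ^ s * a)
      rw [hBt, hbt]
      nlinarith
    have hmono : a ^ s ≤ (a + b) ^ s := Real.rpow_le_rpow hx.le (by linarith) hs0
    rw [abs_of_nonneg (by linarith)] at hnorm
    have h1 : a ^ s * ‖x - y‖ + (a ^ s - b ^ s) * b ≤ (1 + s) * a ^ s * ‖x - y‖ := by
      nlinarith [mul_le_mul_of_nonneg_left hdist (mul_nonneg hs0 hA)]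
    have h2' : (1 + s) * a ^ s * ‖x - y‖ ≤ (p + 4) * (a + b) ^ s * ‖x - y‖ := by
      have : (1 + s) * a ^ s ≤ (p + 4) * (a + b) ^ s := by
        have h3 : (1 + s) * a ^ s ≤ (1 + s) * (a + b) ^ s :=
          mul_le_mul_of_nonneg_left hmono (by linarith)
        have h4 : (1 + s) * (a + b) ^ s ≤ (p + 4) * (a + b) ^ s :=
          mul_le_mul_of_nonneg_right (by simp [hs_def]; linarith)
            (Real.rpow_nonneg (by linarith) s)
        linarith
      exact mul_le_mul_of_nonneg_right this hdist0
    linarith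
  · -- s < 0
    have hs0 : s < 0 := by simp [hs_def]; linarith
    have hsm1 : -1 ≤ s := by simp [hs_def]; linarith
    have ht := aux_t_neg hsm1 ht0 ht1
    have hscal : |a ^ s - b ^ s| * b ≤ a ^ s * (a - b) := by
      have habs : |a ^ s - b ^ s| * b ≤ (t ^ s - 1) * t * (a ^ s * a) ∨
          |a ^ s - b ^ s| * b ≤ a ^ s * (a - b) := by
        rcases eq_or_lt_of_le hb0 with h | h
        · right
          rw [← h, mul_zero]
          nlinarith
        · left
          have hAB : a ^ s ≤ b ^ s := Real.rpow_le_rpow_of_nonpos (by linarith) hxy hs0.le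
          rw [abs_of_nonpos (by linarith), hBt, hbt]
          ring_nf
          nlinarith
      rcases habs with h | h
      · refine h.trans ?_
        have := mul_le_mul_of_nonneg_right ht (by positivity : (0:ℝ) ≤ a ^ s * a)
        nlinarith
      · exact h
    have hbound : a ^ s * ‖x - y‖ + |a ^ s - b ^ s| * b ≤ 2 * a ^ s * ‖x - y‖ := by
      linarith [hscal, mul_le_mul_of_nonneg_left hdist hA]
    -- a^s ≤ 2^(2-p) * (a+b)^s ≤ 2 * (a+b)^s
    have h2a : (2 * a) ^ s ≤ (a + b) ^ s :=
      Real.rpow_le_rpow_of_nonpos (x := a + b) (y := 2 * a) (z := s) (by linarith) (by linarith) hs0.le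
    have h2s : (2:ℝ) ^ s * a ^ s ≤ (a + b) ^ s := by
      rwa [Real.mul_rpow (by norm_num) hx.le] at h2a
    have h2pos : (0:ℝ) < (2:ℝ) ^ s := Real.rpow_pos_of_pos (by norm_num) s
    have hinv : a ^ s ≤ ((2:ℝ) ^ s)⁻¹ * (a + b) ^ s := by
      rw [le_inv_mul_iff₀ h2pos]
      linarith
    have hinvle : ((2:ℝ) ^ s)⁻¹ ≤ 2 := by
      rw [← Real.rpow_neg (by norm_num : (0:ℝ) ≤ 2)]
      calc (2:ℝ) ^ (-s) ≤ (2:ℝ) ^ (1:ℝ) :=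
            Real.rpow_le_rpow_of_exponent_le (by norm_num) (by simp [hs_def]; linarith)
        _ = 2 := Real.rpow_one 2
    have habpos : (0:ℝ) ≤ (a + b) ^ s := Real.rpow_nonneg (by linarith) s
    have : 2 * a ^ s ≤ (p + 4) * (a + b) ^ s := by
      have h5 : 2 * a ^ s ≤ 2 * (((2:ℝ) ^ s)⁻¹ * (a + b) ^ s) := by linarith
      have h6 : ((2:ℝ) ^ s)⁻¹ * (a + b) ^ s ≤ 2 * (a + b) ^ s :=
        mul_le_mul_of_nonneg_right hinvle habpos
      have h7 : 0 ≤ p * (a + b) ^ s := mul_nonneg (by linarith) habpos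
      linarith
    calc ‖(a ^ s) • x - (b ^ s) • y‖ ≤ 2 * a ^ s * ‖x - y‖ := le_trans hnorm hbound
      _ ≤ (p + 4) * (a + b) ^ s * ‖x - y‖ := mul_le_mul_of_nonneg_right this hdist0

/-- For every real `p > 1` there is `d > 0` such that for all `x y : ℝ^N` with
`‖x‖ + ‖y‖ > 0`,
`‖‖x‖^(p-2) • x - ‖y‖^(p-2) • y‖ ≤ d * (‖x‖ + ‖y‖)^(p-2) • ‖x - y‖`. -/
theorem stmt3 (p : ℝ) (hp : 1 < p) (N : ℕ) :
    ∃ d : ℝ, 0 < d ∧ ∀ x y : EuclideanSpace ℝ (Fin N), 0 < ‖x‖ + ‖y‖ →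
      ‖(‖x‖ ^ (p - 2)) • x - (‖y‖ ^ (p - 2)) • y‖ ≤
        d * (‖x‖ + ‖y‖) ^ (p - 2) * ‖x - y‖ := by
  refine ⟨p + 4, by linarith, fun x y hxy => ?_⟩
  rcases le_total ‖y‖ ‖x‖ with h | h
  · exact key p hp x y h (by linarith)
  · have := key p hp y x h (by linarith)
    rwa [norm_sub_rev, norm_sub_rev y x, add_comm ‖y‖ ‖x‖] at this
end

section
/- Suppose f : ℝ → ℝ is continuous and there exists μ > p > 1 such that for all t ≠ 0, 0 < F(t) ≤ (1/μ) t f(t), where F(t) = ∫₀ᵗ f(s) ds. Then there exist constants C₁ > 0 and C₂ ≥ 0 such that F(t) ≥ C₁|t|^μ − C₂ for all t ∈ ℝ. -/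
/-!
Under `μ F(t) ≤ t f(t)` the quotient `F(t) / t ^ μ` has nonnegative derivative
`t ^ (-μ - 1) (t f(t) - μ F(t))` on `t > 0`, so `F(t) ≥ F(1) t ^ μ` for `t ≥ 1`; the same
argument applied to `t ↦ F(-t)` handles `t ≤ -1`. On `[-1, 1]` one uses only `F ≥ 0`.
-/

open Set

section Growth

variable {F f : ℝ → ℝ} {μ : ℝ}

theorem hasDerivAt_mul_rpow_neg {x : ℝ} (hF : HasDerivAt F (f x) x) (hx : 0 < x) :
    HasDerivAt (fun s => F s * s ^ (-μ)) (x ^ (-μ - 1) * (x * f x - μ * F x)) x := by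
  refine (hF.mul (Real.hasDerivAt_rpow_const (p := -μ) (Or.inl hx.ne'))).congr_deriv ?_
  rw [Real.rpow_sub_one hx.ne']
  field_simp
  ring

theorem monotoneOn_mul_rpow_neg (hF : ∀ x, 0 < x → HasDerivAt F (f x) x)
    (hAR : ∀ x, 0 < x → μ * F x ≤ x * f x) :
    MonotoneOn (fun s => F s * s ^ (-μ)) (Ioi 0) := by
  refine monotoneOn_of_hasDerivWithinAt_nonneg (convex_Ioi 0)
    (f' := fun x => x ^ (-μ - 1) * (x * f x - μ * F x))
    (fun x hx => (hasDerivAt_mul_rpow_neg (hF x hx) hx).continuousAt.continuousWithinAt)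
    (fun x hx => ?_) (fun x hx => ?_) <;> rw [interior_Ioi] at hx
  · exact (hasDerivAt_mul_rpow_neg (hF x hx) hx).hasDerivWithinAt
  · exact mul_nonneg (Real.rpow_nonneg hx.le _) (sub_nonneg.2 (hAR x hx))

theorem mul_rpow_le_of_one_le (hF : ∀ x, 0 < x → HasDerivAt F (f x) x)
    (hAR : ∀ x, 0 < x → μ * F x ≤ x * f x) {t : ℝ} (ht : 1 ≤ t) :
    F 1 * t ^ μ ≤ F t := by
  have ht0 : 0 < t := one_pos.trans_le ht
  have hmono := monotoneOn_mul_rpow_neg hF hAR (mem_Ioi.2 one_pos) (mem_Ioi.2 ht0) ht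
  simp only [Real.one_rpow, mul_one] at hmono
  calc F 1 * t ^ μ ≤ F t * t ^ (-μ) * t ^ μ :=
        mul_le_mul_of_nonneg_right hmono (Real.rpow_nonneg ht0.le _)
    _ = F t := by rw [mul_assoc, ← Real.rpow_add ht0, neg_add_cancel, Real.rpow_zero, mul_one]

theorem mul_rpow_neg_le_of_le_neg_one (hF : ∀ x, x < 0 → HasDerivAt F (f x) x)
    (hAR : ∀ x, x < 0 → μ * F x ≤ x * f x) {t : ℝ} (ht : t ≤ -1) :
    F (-1) * (-t) ^ μ ≤ F t := by
  have hreflect := mul_rpow_le_of_one_le (F := fun s => F (-s)) (f := fun s => -f (-s))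
    (fun x hx => ((hF (-x) (neg_neg_of_pos hx)).comp x (hasDerivAt_neg x)).congr_deriv (by ring))
    (fun x hx => by simpa using hAR (-x) (neg_neg_of_pos hx)) (le_neg_of_le_neg ht)
  simpa using hreflect

end Growth

theorem sub_le_of_mul_rpow_le_of_one_le_abs {F : ℝ → ℝ} {μ c : ℝ} (hμ : 0 ≤ μ) (hc : 0 ≤ c)
    (hF : ∀ t, 0 ≤ F t) (hgrowth : ∀ t, 1 ≤ |t| → c * |t| ^ μ ≤ F t) (t : ℝ) :
    c * |t| ^ μ - c ≤ F t := by
  rcases le_total 1 |t| with ht | ht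
  · linarith [hgrowth t ht]
  · have : c * |t| ^ μ ≤ c :=
      mul_le_of_le_one_right hc (Real.rpow_le_one (abs_nonneg t) ht hμ)
    linarith [hF t]

/-- Ambrosetti–Rabinowitz: if `f` is continuous and `0 < F(t) ≤ (1/μ) t f(t)`
for all `t ≠ 0` with `μ > p > 1`, where `F(t) = ∫₀ᵗ f`, then
`F(t) ≥ C₁|t|^μ - C₂` for some `C₁ > 0`, `C₂ ≥ 0`. -/
theorem stmt7 (f : ℝ → ℝ) (p μ : ℝ) (hf : Continuous f)
    (hp : 1 < p) (hμ : p < μ)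
    (hAR : ∀ t : ℝ, t ≠ 0 →
      (0 < ∫ s in (0:ℝ)..t, f s) ∧
      (∫ s in (0:ℝ)..t, f s) ≤ (1 / μ) * t * f t) :
    ∃ C₁ : ℝ, 0 < C₁ ∧ ∃ C₂ : ℝ, 0 ≤ C₂ ∧ ∀ t : ℝ,
      C₁ * |t| ^ μ - C₂ ≤ ∫ s in (0:ℝ)..t, f s := by
  set F : ℝ → ℝ := fun t => ∫ s in (0:ℝ)..t, f s
  have hμ0 : 0 < μ := by linarith
  have hF : ∀ x, HasDerivAt F (f x) x := fun x => (hf.integral_hasStrictDerivAt 0 x).hasDerivAt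
  have hμF : ∀ x, x ≠ 0 → μ * F x ≤ x * f x := fun x hx => by
    have := mul_le_mul_of_nonneg_left (hAR x hx).2 hμ0.le
    rwa [← mul_assoc, ← mul_assoc, mul_one_div_cancel hμ0.ne', one_mul] at this
  have hFnonneg : ∀ t, 0 ≤ F t := fun t => by
    rcases eq_or_ne t 0 with rfl | ht
    · simp [F]
    · exact (hAR t ht).1.le
  set c := min (F 1) (F (-1))
  have hc : 0 < c := lt_min (hAR 1 one_ne_zero).1 (hAR (-1) (by norm_num)).1
  refine ⟨c, hc, c, hc.le, sub_le_of_mul_rpow_le_of_one_le_abs hμ0.le hc.le hFnonneg ?_⟩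
  intro t ht
  rcases le_or_gt 0 t with ht0 | ht0
  · rw [abs_of_nonneg ht0] at ht ⊢
    exact (mul_le_mul_of_nonneg_right (min_le_left _ _) (by positivity)).trans
      (mul_rpow_le_of_one_le (fun x _ => hF x) (fun x hx => hμF x hx.ne') ht)
  · rw [abs_of_neg ht0] at ht ⊢
    exact (mul_le_mul_of_nonneg_right (min_le_right _ _) (by positivity)).trans
      (mul_rpow_neg_le_of_le_neg_one (fun x _ => hF x) (fun x hx => hμF x hx.ne)
        (le_neg_of_le_neg ht))
end
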